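/- Let G be a directed graph with source s and target t, and let E* = {e1, ..., eg} with e_i = (a_i, b_i) be the set of arcs that appear on every s–t path, indexed by the (common) order in which they appear along every s–t path. For 0 ≤ i ≤ g define V_i as the set of vertices v such that in the reduced graph G' = (N, E \ E*) there is a path from o_i to d_i passing through v, where (o_0, d_0) = (s, a_1), (o_i, d_i) = (b_i, a_{i+1}) for 1 ≤ i ≤ g−1, and (o_g, d_g) = (b_g, t). Then the sets V_0, V_1, ..., V_g are pairwise disjoint. -/

import Mathlib

/-- `p` is a (vertex-simple, directed) path from `s` to `t` in the digraph with arc set `E`. -/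
def IsPath {V : Type*} (E : Set (V × V)) (s t : V) (p : List V) : Prop :=
  p ≠ [] ∧ p.head? = some s ∧ p.getLast? = some t ∧ p.Nodup ∧
    p.Chain' (fun a b => (a, b) ∈ E)

/-- The list of arcs traversed by a path, in order. -/
def arcsOf {V : Type*} (p : List V) : List (V × V) := p.zip p.tail

/-- Arc `e` appears strictly before arc `f` along the path `p`. -/
def Precedes {V : Type*} (p : List V) (e f : V × V) : Prop :=
  ∃ i j : ℕ, i < j ∧ (arcsOf p)[i]? = some e ∧ (arcsOf p)[j]? = some f

section Aux

variable {V : Type*}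

/-- A (not necessarily simple) walk for a relation `R`. -/
def IsWalk (R : V → V → Prop) (s t : V) (p : List V) : Prop :=
  p ≠ [] ∧ p.head? = some s ∧ p.getLast? = some t ∧ p.Chain' R

lemma arcsOf_getElem? {p : List V} {e : V × V} {k : ℕ} :
    (arcsOf p)[k]? = some e ↔ p[k]? = some e.1 ∧ p[k + 1]? = some e.2 := by
  unfold arcsOf
  rw [List.getElem?_zip_eq_some, List.getElem?_tail]

lemma mem_arcsOf {p : List V} {e : V × V} :
    e ∈ arcsOf p ↔ ∃ k, p[k]? = some e.1 ∧ p[k + 1]? = some e.2 := by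
  rw [List.mem_iff_getElem?]
  exact exists_congr fun k => arcsOf_getElem?

lemma chain'_iff_forall {R : V → V → Prop} {l : List V} :
    l.Chain' R ↔ ∀ k u v, l[k]? = some u → l[k + 1]? = some v → R u v := by
  show l.IsChain R ↔ _
  rw [List.isChain_iff_getElem]
  constructor
  · intro h k u v hu hv
    obtain ⟨hk1, hv⟩ := List.getElem?_eq_some_iff.mp hv
    obtain ⟨hk, hu⟩ := List.getElem?_eq_some_iff.mp hu
    have := h k (by omega)
    simpa [List.get_eq_getElem, hu, hv] using this
  · intro h i hi
    exact h i _ _ (List.getElem?_eq_getElem (by omega)) (List.getElem?_eq_getElem (by omega))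

lemma nodup_getElem?_inj {l : List V} (h : l.Nodup) {k k' : ℕ} {c : V}
    (h1 : l[k]? = some c) (h2 : l[k']? = some c) : k = k' := by
  obtain ⟨hk, e1⟩ := List.getElem?_eq_some_iff.mp h1
  obtain ⟨hk', e2⟩ := List.getElem?_eq_some_iff.mp h2
  have := List.nodup_iff_injective_get.mp h
    (a₁ := ⟨k, hk⟩) (a₂ := ⟨k', hk'⟩) (by simp [List.get_eq_getElem, e1, e2])
  exact congrArg Fin.val this

lemma IsWalk.append {R : V → V → Prop} {s x t : V} {p q : List V}
    (hp : IsWalk R s x p) (hq : IsWalk R x t q) : IsWalk R s t (p ++ q.tail) := by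
  obtain ⟨hpne, hph, hpl, hpc⟩ := hp
  obtain ⟨hqne, hqh, hql, hqc⟩ := hq
  cases q with
  | nil => exact absurd rfl hqne
  | cons y q' =>
    have hyx : y = x := by simpa using hqh
    have hcq' : List.Chain' R q' := (List.isChain_cons.mp hqc).2
    refine ⟨by simp [hpne], ?_, ?_, ?_⟩
    · rw [List.head?_append]
      cases p with
      | nil => exact absurd rfl hpne
      | cons z p' =>
        simp only [List.head?_cons] at hph ⊢
        simp [hph]
    · rcases eq_or_ne q' [] with h | h
      · subst h
        have hty : t = y := by simpa using hql.symm
        rw [hty, hyx]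
        simpa using hpl
      · rw [List.getLast?_append]
        have : q'.getLast? = some t := by
          cases q' with
          | nil => exact absurd rfl h
          | cons z l => rwa [List.getLast?_cons_cons] at hql
        simp [this]
    · show List.IsChain R _
      rw [List.isChain_append]
      refine ⟨hpc, hcq', ?_⟩
      intro u hu v hv
      have hux : u = y := by
        rw [hpl] at hu
        rw [hyx]
        exact (by simpa using hu : x = u).symm
      subst hux
      exact (List.isChain_cons.mp hqc).1 v hv

lemma exists_nodup_walk {R : V → V → Prop} {s t : V}
    (h : ∃ p, IsWalk R s t p) : ∃ q, IsWalk R s t q ∧ q.Nodup := by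
  obtain ⟨p, hp⟩ := h
  suffices H : ∀ n (p : List V), p.length = n → IsWalk R s t p →
      ∃ q, IsWalk R s t q ∧ q.Nodup from H p.length p rfl hp
  intro n
  induction n using Nat.strong_induction_on with
  | _ n ih =>
  intro p hn hp
  subst hn
  by_cases hnd : p.Nodup
  · exact ⟨p, hp, hnd⟩
  · rw [List.nodup_iff_injective_get] at hnd
    rw [Function.not_injective_iff] at hnd
    obtain ⟨⟨k1, hk1⟩, ⟨k2, hk2⟩, heq, hne⟩ := hnd
    have hne' : k1 ≠ k2 := fun h => hne (Fin.ext h)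
    obtain ⟨i, j, hi, hj, hij, hdup⟩ :
        ∃ i j, ∃ (hi : i < p.length) (hj : j < p.length), i < j ∧ p[i]'hi = p[j]'hj := by
      rcases lt_or_gt_of_ne hne' with h | h
      · exact ⟨k1, k2, hk1, hk2, h, heq⟩
      · exact ⟨k2, k1, hk2, hk1, h, heq.symm⟩
    obtain ⟨hpne, hph, hpl, hpc⟩ := hp
    set p' := p.take (i + 1) ++ p.drop (j + 1) with hp'def
    have hlen_take : (p.take (i + 1)).length = i + 1 := by
      rw [List.length_take]; omega
    have htake_ne : p.take (i + 1) ≠ [] := by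
      intro h; rw [← List.length_eq_zero_iff] at h; omega
    have hlast_take : (p.take (i + 1)).getLast? = some p[j] := by
      rw [List.getLast?_eq_getElem?, hlen_take]
      simp only [Nat.add_sub_cancel, List.getElem?_take]
      rw [if_pos (by omega), List.getElem?_eq_getElem hi]
      exact congrArg some hdup
    have hwalk' : IsWalk R s t p' := by
      refine ⟨by simp [hp'def, htake_ne], ?_, ?_, ?_⟩
      · rw [hp'def, List.head?_append]
        have h1 : (p.take (i + 1)).head? = some s := by
          rw [List.head?_eq_getElem?, List.getElem?_take, if_pos (by omega),
            ← List.head?_eq_getElem?, hph]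
        simp [h1]
      · rcases eq_or_ne (p.drop (j + 1)) [] with h | h
        · have hjlen : p.length - (j + 1) = 0 := by
            have := congrArg List.length h
            rwa [List.length_drop, List.length_nil] at this
          have hj1 : j = p.length - 1 := by omega
          rw [List.getLast?_eq_getElem?, List.getElem?_eq_getElem (by omega)] at hpl
          rw [hp'def, h, List.append_nil, hlast_take,
            ← List.getElem?_eq_getElem hj, hj1, List.getElem?_eq_getElem (by omega)]
          exact hpl
        · rw [hp'def, List.getLast?_append]
          have hlt : j + 1 < p.length := by
            by_contra hc
            exact h (List.drop_eq_nil_of_le (by omega))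
          have h2 : (p.drop (j + 1)).getLast? = some t := by
            rw [List.getLast?_eq_getElem?, List.length_drop, List.getElem?_drop]
            rw [List.getLast?_eq_getElem?] at hpl
            rw [← hpl]
            congr 1
            omega
          simp [h2]
      · rw [hp'def]
        show List.IsChain R _
        rw [List.isChain_append]
        refine ⟨hpc.take _, hpc.drop _, ?_⟩
        intro u hu v hv
        rw [hlast_take] at hu
        have hu' : p[j] = u := by simpa using hu
        rw [List.head?_eq_getElem?, List.getElem?_drop] at hv
        exact hu' ▸ chain'_iff_forall.mp hpc j p[j] v
          (List.getElem?_eq_getElem hj) (by simpa using hv)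
    have hlen' : p'.length < p.length := by
      rw [hp'def, List.length_append, hlen_take, List.length_drop]
      omega
    exact ih p'.length hlen' p' rfl hwalk'

end Aux

section Main

variable {V : Type*}

/-- Key lemma : the case `i < j`. -/
lemma Vsets_disjoint_of_lt (E : Set (V × V)) (s t : V)
    (g : ℕ) (a b : Fin g → V) (o d : Fin (g + 1) → V)
    (ho0 : o 0 = s) (hdg : d (Fin.last g) = t)
    (hd : ∀ i : Fin g, d i.castSucc = a i) (hob : ∀ i : Fin g, o i.succ = b i)
    (hmand : ∀ p, IsPath E s t p → ∀ i : Fin g, (a i, b i) ∈ arcsOf p)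
    (horder : ∀ p, IsPath E s t p → ∀ i j : Fin g, i < j →
      Precedes p (a i, b i) (a j, b j))
    (hex : ∃ p, IsPath E s t p) (i j : Fin (g + 1)) (hij : i < j) :
    Disjoint
      {w | ∃ p, IsPath (E \ Set.range fun k => (a k, b k)) (o i) (d i) p ∧ w ∈ p}
      {w | ∃ p, IsPath (E \ Set.range fun k => (a k, b k)) (o j) (d j) p ∧ w ∈ p} := by
  rw [Set.disjoint_left]
  rintro w ⟨p, hp, hwp⟩ ⟨q, hq, hwq⟩
  obtain ⟨P, hP⟩ := hex
  have hPpath := hP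
  obtain ⟨hPne, hPh, hPl, hPnd, hPc⟩ := hP
  have hijv : (i : ℕ) < (j : ℕ) := hij
  have hig : (i : ℕ) < g := by omega
  set i' : Fin g := ⟨i, hig⟩ with hi'def
  set R' : V → V → Prop := fun u v => (u, v) ∈ E ∧ (u, v) ≠ (a i', b i') with hR'def
  have hEsub : ∀ u v : V, (u, v) ∈ E \ Set.range (fun k => (a k, b k)) → R' u v := by
    rintro u v ⟨h1, h2⟩
    exact ⟨h1, fun hc => h2 (hc ▸ ⟨i', rfl⟩)⟩
  -- prefix
  obtain ⟨m, hm, hmav⟩ :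
      ∃ m, P[m]? = some (o i) ∧ ∀ k < m, P[k]? ≠ some (a i') := by
    rcases Nat.eq_zero_or_pos (i : ℕ) with h0 | hpos
    · refine ⟨0, ?_, fun k hk => absurd hk (Nat.not_lt_zero k)⟩
      have : i = 0 := Fin.ext h0
      rw [this, ho0, ← List.head?_eq_getElem?, hPh]
    · obtain ⟨c, hc⟩ := Nat.exists_eq_add_of_lt hpos
      simp only [Nat.zero_add] at hc
      set k0 : Fin g := ⟨c, by omega⟩ with hk0def
      have hio : i = k0.succ := Fin.ext (by simp [hk0def, hc, Nat.add_comm])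
      have hoi : o i = b k0 := by rw [hio, hob]
      have hk0i' : k0 < i' := by
        rw [Fin.lt_def]; simp [hk0def, hi'def]; omega
      obtain ⟨r, s', hrs, hr, hs⟩ := horder P hPpath k0 i' hk0i'
      rw [arcsOf_getElem?] at hr hs
      refine ⟨r + 1, by rw [hoi]; exact hr.2, ?_⟩
      intro k hk hcon
      have := nodup_getElem?_inj hPnd hcon hs.1
      subst this
      exact absurd hk (Nat.not_lt.mpr hrs)
  -- suffix
  obtain ⟨m', hm', hm'av⟩ :
      ∃ m', P[m']? = some (d j) ∧ ∀ k, m' ≤ k →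
        ¬(P[k]? = some (a i') ∧ P[k + 1]? = some (b i')) := by
    rcases eq_or_lt_of_le (Nat.le_of_lt_succ j.isLt) with hg | hlt
    · -- j = last
      have hjl : j = Fin.last g := Fin.ext hg
      have hPlen : 1 ≤ P.length := by
        cases P with
        | nil => exact absurd rfl hPne
        | cons _ _ => simp
      refine ⟨P.length - 1, ?_, ?_⟩
      · rw [← List.getLast?_eq_getElem?, hPl, hjl, hdg]
      · intro k hk hcon
        have : P[k + 1]? = none := List.getElem?_eq_none (by omega)
        rw [this] at hcon
        exact Option.some_ne_none _ hcon.2.symm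
    · set j'' : Fin g := ⟨j, hlt⟩ with hj''def
      have hjc : j = j''.castSucc := Fin.ext rfl
      have hdj : d j = a j'' := by rw [hjc, hd]
      have hij'' : i' < j'' := by rw [Fin.lt_def]; exact hijv
      obtain ⟨u, v, huv, hu, hv⟩ := horder P hPpath i' j'' hij''
      rw [arcsOf_getElem?] at hu hv
      refine ⟨v, by rw [hdj]; exact hv.1, ?_⟩
      intro k hk hcon
      have := nodup_getElem?_inj hPnd hcon.1 hu.1
      omega
  have hmlt : m < P.length := (List.getElem?_eq_some_iff.mp hm).1
  have hm'lt : m' < P.length := (List.getElem?_eq_some_iff.mp hm').1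
  -- the four walks
  have wpre : IsWalk R' s (o i) (P.take (m + 1)) := by
    have hlt : (P.take (m + 1)).length = m + 1 := by rw [List.length_take]; omega
    refine ⟨by intro h; rw [← List.length_eq_zero_iff] at h; omega, ?_, ?_, ?_⟩
    · rw [List.head?_eq_getElem?, List.getElem?_take, if_pos (by omega),
        ← List.head?_eq_getElem?, hPh]
    · rw [List.getLast?_eq_getElem?, hlt]
      simpa [List.getElem?_take] using hm
    · rw [chain'_iff_forall]
      intro k u v hu hv
      rw [List.getElem?_take] at hu hv
      by_cases hklt : k + 1 < m + 1
      · rw [if_pos hklt] at hv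
        rw [if_pos (by omega)] at hu
        refine ⟨chain'_iff_forall.mp hPc k u v hu hv, fun hc => ?_⟩
        rw [Prod.mk.injEq] at hc
        exact hmav k (by omega) (hc.1 ▸ hu)
      · rw [if_neg hklt] at hv
        exact (Option.some_ne_none _ hv.symm).elim
  obtain ⟨n, hn⟩ := List.mem_iff_getElem?.mp hwp
  have hnlt : n < p.length := (List.getElem?_eq_some_iff.mp hn).1
  obtain ⟨hpne, hph, hpl, hpnd, hpc⟩ := hp
  have wmid1 : IsWalk R' (o i) w (p.take (n + 1)) := by
    have hlt : (p.take (n + 1)).length = n + 1 := by rw [List.length_take]; omega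
    refine ⟨by intro h; rw [← List.length_eq_zero_iff] at h; omega, ?_, ?_, ?_⟩
    · rw [List.head?_eq_getElem?, List.getElem?_take, if_pos (by omega),
        ← List.head?_eq_getElem?, hph]
    · rw [List.getLast?_eq_getElem?, hlt]
      simpa [List.getElem?_take] using hn
    · exact (hpc.imp (fun x y h => hEsub x y h)).take _
  obtain ⟨n', hn'⟩ := List.mem_iff_getElem?.mp hwq
  have hn'lt : n' < q.length := (List.getElem?_eq_some_iff.mp hn').1
  obtain ⟨hqne, hqh, hql, hqnd, hqc⟩ := hq
  have wmid2 : IsWalk R' w (d j) (q.drop n') := by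
    refine ⟨by intro h; have := congrArg List.length h; simp at this; omega, ?_, ?_, ?_⟩
    · rw [List.head?_eq_getElem?, List.getElem?_drop]
      simpa using hn'
    · rw [List.getLast?_eq_getElem?, List.length_drop, List.getElem?_drop]
      rw [List.getLast?_eq_getElem?] at hql
      rw [← hql]
      congr 1
      omega
    · exact (hqc.imp (fun x y h => hEsub x y h)).drop _
  have wsuf : IsWalk R' (d j) t (P.drop m') := by
    refine ⟨by intro h; have := congrArg List.length h; simp at this; omega, ?_, ?_, ?_⟩
    · rw [List.head?_eq_getElem?, List.getElem?_drop]
      simpa using hm'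
    · rw [List.getLast?_eq_getElem?, List.length_drop, List.getElem?_drop]
      rw [List.getLast?_eq_getElem?] at hPl
      rw [← hPl]
      congr 1
      omega
    · rw [chain'_iff_forall]
      intro k u v hu hv
      rw [List.getElem?_drop] at hu hv
      have hv' : P[(m' + k) + 1]? = some v := by rw [Nat.add_assoc]; exact hv
      refine ⟨chain'_iff_forall.mp hPc (m' + k) u v hu hv', fun hc => ?_⟩
      rw [Prod.mk.injEq] at hc
      exact hm'av (m' + k) (by omega) ⟨hc.1 ▸ hu, hc.2 ▸ hv'⟩
  have hW : IsWalk R' s t _ := wpre.append (wmid1.append (wmid2.append wsuf))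
  obtain ⟨q0, hq0, hq0nd⟩ := exists_nodup_walk ⟨_, hW⟩
  obtain ⟨h1, h2, h3, h4⟩ := hq0
  have hq0path : IsPath E s t q0 :=
    ⟨h1, h2, h3, hq0nd, h4.imp fun x y h => h.1⟩
  have hemem := hmand q0 hq0path i'
  rw [mem_arcsOf] at hemem
  obtain ⟨k, hk1, hk2⟩ := hemem
  exact (chain'_iff_forall.mp h4 k _ _ hk1 hk2).2 rfl

end Main

/-- The vertex sets `V_i` induced by the ordered mandatory arcs are pairwise disjoint.
Here `e i = (a i, b i)` are the arcs lying on every `s`–`t` path, appearing in the common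
order of their indices; `o i`/`d i` are the origin/destination of the `i`-th segment, and
`V_i` is the set of vertices lying on some `o i`–`d i` path in the reduced graph
`E \ E*`. -/
theorem Vsets_pairwise_disjoint {V : Type*} (E : Set (V × V)) (s t : V)
    (g : ℕ) (a b : Fin g → V) (o d : Fin (g + 1) → V)
    (ho0 : o 0 = s) (hdg : d (Fin.last g) = t)
    (hd : ∀ i : Fin g, d i.castSucc = a i) (hob : ∀ i : Fin g, o i.succ = b i)
    (hmand : ∀ p, IsPath E s t p → ∀ i : Fin g, (a i, b i) ∈ arcsOf p)
    (horder : ∀ p, IsPath E s t p → ∀ i j : Fin g, i < j →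
      Precedes p (a i, b i) (a j, b j))
    (hex : ∃ p, IsPath E s t p) :
    ∀ i j : Fin (g + 1), i ≠ j →
      Disjoint
        {w | ∃ p, IsPath (E \ Set.range fun k => (a k, b k)) (o i) (d i) p ∧ w ∈ p}
        {w | ∃ p, IsPath (E \ Set.range fun k => (a k, b k)) (o j) (d j) p ∧ w ∈ p} := by
  intro i j hij
  rcases lt_or_gt_of_ne hij with h | h
  · exact Vsets_disjoint_of_lt E s t g a b o d ho0 hdg hd hob hmand horder hex i j h
  · exact (Vsets_disjoint_of_lt E s t g a b o d ho0 hdg hd hob hmand horder hex j i h).symm
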